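/- The PF-D0 coefficient function b5 satisfies lim_{v→0⁺} b5(v) = 50277247/985600 and lim_{v→0⁺} (b5(v) − 50277247/985600)/v² = −16301796103/1383782400; in particular b5 tends to the corresponding coefficient of the classical Quinlan–Tremaine method as v → 0. -/

import Mathlib

/-!
By the power-reduction formula `512 sin (v/2) ^ 10 = 126 - 210 cos v + ⋯ - cos 5v`, the numerator
of `(b₅(v) - 50277247/985600) / v²` is a sum of terms `(a + b v²) cos (k v)`. Replacing each
`cos (k v)` by its Taylor polynomial of degree 14, which is accurate to `O(v¹⁶)` by the cosine
series, shows that this numerator is `-16301796103/312 · v¹⁴ + O(v¹⁶)`, while the denominator is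
`4435200 · v¹⁴ · sinc (v/2) ^ 10`. The limit of `b₅` itself follows from that of the quotient.
-/

open Filter

/-- The variable coefficient `b₁(v)` of the phase-fitted method PF-D0. -/
noncomputable def pfb1 (v : ℝ) : ℝ :=
  (((-124184636) * Real.cos v + 70378348 * Real.cos (2 * v) - 24862148 * Real.cos (3 * v)
        + 5153611 * Real.cos (4 * v)) * v ^ 2
      + 25 * (3013169 * v ^ 2 - 16128 * Real.cos (3 * v) + 32256 * Real.cos (4 * v)
        - 32256 * Real.cos (5 * v) + 16128 * Real.cos (6 * v)))
    / (206438400 * v ^ 2 * (Real.sin (v / 2)) ^ 10)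

/-- The variable coefficient `b₂(v)` of the phase-fitted method PF-D0. -/
noncomputable def pfb2 (v : ℝ) : ℝ :=
  (v ^ 2 * (159588050 * Real.cos v - 85350160 * Real.cos (2 * v)
        + 16708985 * Real.cos (3 * v) - 5153611 * Real.cos (5 * v))
      - 16 * (6496079 * v ^ 2 - 252000 * Real.cos (3 * v) + 504000 * Real.cos (4 * v)
        - 504000 * Real.cos (5 * v) + 252000 * Real.cos (6 * v)))
    / (206438400 * v ^ 2 * (Real.sin (v / 2)) ^ 10)

/-- The variable coefficient `b₃(v)` of the phase-fitted method PF-D0. -/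
noncomputable def pfb3 (v : ℝ) : ℝ :=
  (((-367257540) * Real.cos v + 183567900 * Real.cos (2 * v)
        - 16708985 * Real.cos (4 * v) + 24862148 * Real.cos (5 * v)) * v ^ 2
      + 81 * (3175117 * v ^ 2 - 224000 * Real.cos (3 * v) + 448000 * Real.cos (4 * v)
        - 448000 * Real.cos (5 * v) + 224000 * Real.cos (6 * v)))
    / (206438400 * v ^ 2 * (Real.sin (v / 2)) ^ 10)

/-- The variable coefficient `b₄(v)` of the phase-fitted method PF-D0. -/
noncomputable def pfb4 (v : ℝ) : ℝ :=
  (30675810 * v ^ 2 * Real.cos v - 42958788 * v ^ 2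
      + 75 * (161280 - 611893 * v ^ 2) * Real.cos (3 * v)
      + 140 * (152411 * v ^ 2 - 172800) * Real.cos (4 * v)
      + (24192000 - 17594587 * v ^ 2) * Real.cos (5 * v)
      - 12096000 * Real.cos (6 * v))
    / (51609600 * v ^ 2 * (Real.sin (v / 2)) ^ 10)

/-- The variable coefficient `b₅(v)` of the phase-fitted method PF-D0. -/
noncomputable def pfb5 (v : ℝ) : ℝ :=
  ((-61351620) * v ^ 2 * Real.cos (2 * v) + 85936557 * v ^ 2
      + 30 * (6120959 * v ^ 2 - 1411200) * Real.cos (3 * v)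
      + 25 * (3386880 - 3191761 * v ^ 2) * Real.cos (4 * v)
      + (62092318 * v ^ 2 - 84672000) * Real.cos (5 * v)
      + 42336000 * Real.cos (6 * v))
    / (103219200 * v ^ 2 * (Real.sin (v / 2)) ^ 10)

/-- The variable coefficient `b₆(v)` of the phase-fitted method PF-D0. -/
noncomputable def pfb6 (v : ℝ) : ℝ :=
  (((-171873114) * Real.cos v + 171835152 * Real.cos (2 * v)
        - 257184477 * Real.cos (3 * v) + 103937264 * Real.cos (4 * v)
        - 75329225 * Real.cos (5 * v)) * v ^ 2
      + 50803200 * (Real.cos (3 * v) - 2 * Real.cos (4 * v)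
        + 2 * Real.cos (5 * v) - Real.cos (6 * v)))
    / (103219200 * v ^ 2 * (Real.sin (v / 2)) ^ 10)

open Asymptotics Finset Real Topology
open scoped Nat

noncomputable def cosTaylor (n : ℕ) (x : ℝ) : ℝ :=
  ∑ j ∈ range n, (-1) ^ j * x ^ (2 * j) / (2 * j)!

lemma abs_cos_sub_cosTaylor_le (n : ℕ) (x : ℝ) :
    |cos x - cosTaylor n x| ≤ x ^ (2 * n) * cosh x := by
  have hcos := Real.hasSum_cos x
  rw [← hcos.tsum_eq, ← hcos.summable.sum_add_tsum_nat_add n, cosTaylor, add_sub_cancel_left,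
    ← Real.norm_eq_abs]
  refine tsum_of_norm_bounded ((Real.hasSum_cosh x).mul_left (x ^ (2 * n))) fun j => ?_
  simp only [norm_div, norm_mul, norm_pow, norm_neg, norm_one, one_pow, one_mul,
    RCLike.norm_natCast, Real.norm_eq_abs]
  rw [(even_two_mul _).pow_abs, mul_add, pow_add, mul_comm, mul_div_assoc]
  gcongr
  · exact (even_two_mul n).pow_nonneg x
  · exact (even_two_mul j).pow_nonneg x
  · omega

lemma cos_sub_cosTaylor_isBigO (n : ℕ) :
    (fun x => cos x - cosTaylor n x) =O[𝓝 0] fun x => x ^ (2 * n) := by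
  have hcosh : (fun x => x ^ (2 * n) * cosh x) =O[𝓝 0] fun x => x ^ (2 * n) := by
    simpa using (isBigO_refl (fun x : ℝ => x ^ (2 * n)) (𝓝 0)).mul
      ((continuous_cosh.tendsto 0).isBigO_one (F := ℝ))
  exact (isBigO_of_le _ fun x => (abs_cos_sub_cosTaylor_le n x).trans (le_abs_self _)).trans hcosh

lemma quadratic_mul_cos_sub_cosTaylor_isBigO (n : ℕ) (a b k : ℝ) :
    (fun v => (a + b * v ^ 2) * (cos (k * v) - cosTaylor n (k * v))) =O[𝓝 0]
      fun v => v ^ (2 * n) := by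
  have hk : Tendsto (fun v : ℝ => k * v) (𝓝 0) (𝓝 0) := by
    simpa using (continuous_const_mul k).tendsto 0
  have hrem := ((cos_sub_cosTaylor_isBigO n).comp_tendsto hk).trans
    ((isBigO_refl (fun v : ℝ => v ^ (2 * n)) (𝓝 0)).const_mul_left (k ^ (2 * n)) |>.congr_left
      fun v => (mul_pow k v _).symm)
  simpa using (((continuous_const.add (continuous_const.mul (continuous_pow 2))).tendsto
    (0 : ℝ)).isBigO_one (F := ℝ)).mul hrem

lemma tendsto_div_pow_of_sub_isLittleO {𝕜 : Type*} [NormedField 𝕜] {f : 𝕜 → 𝕜} {c : 𝕜} {m : ℕ}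
    (h : (fun x => f x - c * x ^ m) =o[𝓝 0] fun x => x ^ m) :
    Tendsto (fun x => f x / x ^ m) (𝓝[≠] 0) (𝓝 c) := by
  have h0 := ((h.mono (nhdsWithin_le_nhds (s := {0}ᶜ))).tendsto_div_nhds_zero).add_const c
  rw [zero_add] at h0
  refine h0.congr' (eventually_mem_nhdsWithin.mono fun x (hx : x ≠ 0) => ?_)
  field_simp
  ring

lemma sin_half_pow_ten (x : ℝ) :
    512 * sin (x / 2) ^ 10 = 126 - 210 * cos x + 120 * cos (2 * x) - 45 * cos (3 * x)
      + 10 * cos (4 * x) - cos (5 * x) := by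
  have hsin : sin (x / 2) ^ 2 = (1 - cos x) / 2 := by
    have h := cos_two_mul (x / 2)
    rw [show 2 * (x / 2) = x by ring] at h
    linear_combination (1 / 2) * h + sin_sq_add_cos_sq (x / 2)
  have h4 : cos (4 * x) = 2 * cos (2 * x) ^ 2 - 1 := by
    rw [show 4 * x = 2 * (2 * x) by ring, cos_two_mul]
  have h5 : cos (5 * x) = cos (2 * x) * cos (3 * x) - sin (2 * x) * sin (3 * x) := by
    rw [← cos_add]; ring_nf
  rw [show sin (x / 2) ^ 10 = (sin (x / 2) ^ 2) ^ 5 by ring, hsin, h4, h5, cos_two_mul,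
    cos_three_mul, sin_two_mul, sin_three_mul]
  linear_combination cos x * (8 * sin x ^ 2 - 8 * cos x ^ 2 + 2) * sin_sq_add_cos_sq x

noncomputable def pfb5Num (v : ℝ) : ℝ :=
  (-61351620) * v ^ 2 * cos (2 * v) + 85936557 * v ^ 2
    + 30 * (6120959 * v ^ 2 - 1411200) * cos (3 * v)
    + 25 * (3386880 - 3191761 * v ^ 2) * cos (4 * v)
    + (62092318 * v ^ 2 - 84672000) * cos (5 * v)
    + 42336000 * cos (6 * v)

/-- `44 · 103219200 · v² sin (v/2) ^ 10 · (pfb5 v - 50277247/985600)`, with `512 sin (v/2) ^ 10`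
expanded by `sin_half_pow_ten`. -/
noncomputable def pfb5DiffNum (v : ℝ) : ℝ :=
  44 * pfb5Num v - 452495223 * v ^ 2 * (126 - 210 * cos v + 120 * cos (2 * v)
    - 45 * cos (3 * v) + 10 * cos (4 * v) - cos (5 * v))

lemma pfb5_sub_div_sq {v : ℝ} (hv : v ≠ 0) (hs : sinc (v / 2) ≠ 0) :
    (pfb5 v - 50277247 / 985600) / v ^ 2
      = pfb5DiffNum v / v ^ 14 / (4435200 * sinc (v / 2) ^ 10) := by
  have hsin : sin (v / 2) = v / 2 * sinc (v / 2) := by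
    rw [sinc_of_ne_zero (div_ne_zero hv two_ne_zero)]
    field_simp
  rw [pfb5DiffNum, ← sin_half_pow_ten, pfb5, ← pfb5Num, hsin]
  field_simp
  ring

lemma pfb5DiffNum_sub_isBigO :
    (fun v => pfb5DiffNum v - (-16301796103 / 312) * v ^ 14) =O[𝓝 0] fun v => v ^ 16 := by
  have key : ∀ v, pfb5DiffNum v - (-16301796103 / 312) * v ^ 14
      = (-373955977685 / 1872) * v ^ 16
        + (0 + 95023996830 * v ^ 2) * (cos (1 * v) - cosTaylor 8 (1 * v))
        + (0 + (-56998898040) * v ^ 2) * (cos (2 * v) - cosTaylor 8 (2 * v))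
        + (-1862784000 + 28441950915 * v ^ 2) * (cos (3 * v) - cosTaylor 8 (3 * v))
        + (3725568000 + (-8035889330) * v ^ 2) * (cos (4 * v) - cosTaylor 8 (4 * v))
        + (-3725568000 + 3184557215 * v ^ 2) * (cos (5 * v) - cosTaylor 8 (5 * v))
        + (1862784000 + 0 * v ^ 2) * (cos (6 * v) - cosTaylor 8 (6 * v)) := by
    intro v
    simp only [pfb5DiffNum, pfb5Num, cosTaylor, sum_range_succ, sum_range_zero, one_mul]
    norm_num [Nat.factorial]
    ring
  rw [funext key]
  exact (((((((isBigO_refl (fun v : ℝ => v ^ 16) _).const_mul_left _).add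
    (quadratic_mul_cos_sub_cosTaylor_isBigO 8 _ _ _)).add
    (quadratic_mul_cos_sub_cosTaylor_isBigO 8 _ _ _)).add
    (quadratic_mul_cos_sub_cosTaylor_isBigO 8 _ _ _)).add
    (quadratic_mul_cos_sub_cosTaylor_isBigO 8 _ _ _)).add
    (quadratic_mul_cos_sub_cosTaylor_isBigO 8 _ _ _)).add
    (quadratic_mul_cos_sub_cosTaylor_isBigO 8 _ _ _)

/-- The PF-D0 coefficient `pfb5` tends to the corresponding classical
Quinlan–Tremaine coefficient as `v → 0⁺`, with the stated `v²`-Taylor coefficient. -/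
theorem pfd0_b5_limit :
    Tendsto pfb5 (nhdsWithin 0 (Set.Ioi 0)) (nhds (50277247 / 985600)) ∧
    Tendsto (fun v : ℝ => (pfb5 v - (50277247 / 985600)) / v ^ 2)
      (nhdsWithin 0 (Set.Ioi 0)) (nhds (-16301796103 / 1383782400)) := by
  have hnum : Tendsto (fun v => pfb5DiffNum v / v ^ 14) (𝓝[≠] 0) (𝓝 (-16301796103 / 312)) :=
    tendsto_div_pow_of_sub_isLittleO
      (pfb5DiffNum_sub_isBigO.trans_isLittleO (isLittleO_pow_pow (by norm_num)))
  have hsinc : Tendsto (fun v : ℝ => sinc (v / 2)) (𝓝[≠] 0) (𝓝 1) := by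
    simpa [Function.comp_def] using
      ((continuous_sinc.comp (continuous_id.div_const 2)).tendsto 0).mono_left nhdsWithin_le_nhds
  have hquot : Tendsto (fun v : ℝ => (pfb5 v - 50277247 / 985600) / v ^ 2) (𝓝[≠] 0)
      (𝓝 (-16301796103 / 1383782400)) := by
    have h := hnum.div ((hsinc.pow 10).const_mul 4435200) (by norm_num)
    rw [show (-16301796103 / 312 : ℝ) / (4435200 * 1 ^ 10) = -16301796103 / 1383782400 by
      norm_num] at h
    refine h.congr' ?_
    filter_upwards [self_mem_nhdsWithin, hsinc.eventually_ne one_ne_zero] with v hv hs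
    exact (pfb5_sub_div_sq hv hs).symm
  have hsq : Tendsto (fun v : ℝ => v ^ 2) (𝓝[≠] 0) (𝓝 0) := by
    simpa using ((continuous_pow 2).tendsto (0 : ℝ)).mono_left nhdsWithin_le_nhds
  have hval : Tendsto pfb5 (𝓝[≠] 0) (𝓝 (50277247 / 985600)) := by
    have h := (hsq.mul hquot).const_add (50277247 / 985600 : ℝ)
    rw [zero_mul, add_zero] at h
    refine h.congr' (eventually_mem_nhdsWithin.mono fun v (hv : v ≠ 0) => ?_)
    field_simp
    ring
  exact ⟨hval.mono_left (nhdsGT_le_nhdsNE 0), hquot.mono_left (nhdsGT_le_nhdsNE 0)⟩
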